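/- arXiv:2510.13665 — 2 statements merged into one kernel-verified Lean document; each statement's English description precedes it below -/
import Mathlib

section
/- If the outer function φ is axis-permutation equivariant, then the full set-based axial network x ↦ φ(Σ_{π ∈ S_K} T_π⁻¹(ψ(T_π(x)))) is axis-permutation equivariant. -/
/-- The axis-permutation map on cubical rank-K tensors. -/
def axPerm {K n : ℕ} (π : Equiv.Perm (Fin K))
    (x : (Fin K → Fin n) → ℝ) : (Fin K → Fin n) → ℝ :=
  fun I => x (I ∘ π)

lemma axPerm_mul {K n : ℕ} (a b : Equiv.Perm (Fin K)) (x : (Fin K → Fin n) → ℝ) :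
    axPerm a (axPerm b x) = axPerm (a * b) x := by
  funext I; rfl

lemma axPerm_sum {K n : ℕ} (a : Equiv.Perm (Fin K))
    (f : Equiv.Perm (Fin K) → ((Fin K → Fin n) → ℝ)) :
    axPerm a (∑ π : Equiv.Perm (Fin K), f π) = ∑ π : Equiv.Perm (Fin K), axPerm a (f π) := by
  funext I
  simp [axPerm]

/-- If the outer map `φ` is axis-permutation equivariant, then the full
set-based axial network `x ↦ φ(∑_{π} T_π⁻¹(ψ(T_π x)))` is
axis-permutation equivariant (Theorem 1 of the paper). -/
theorem sxnn_full_equivariant (K n : ℕ)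
    (ψ φ : ((Fin K → Fin n) → ℝ) → ((Fin K → Fin n) → ℝ))
    (hφ : ∀ (τ : Equiv.Perm (Fin K)) (y), φ (axPerm τ y) = axPerm τ (φ y))
    (σ : Equiv.Perm (Fin K)) (x : (Fin K → Fin n) → ℝ) :
    φ (∑ π : Equiv.Perm (Fin K), axPerm π⁻¹ (ψ (axPerm π (axPerm σ x)))) =
      axPerm σ (φ (∑ π : Equiv.Perm (Fin K), axPerm π⁻¹ (ψ (axPerm π x)))) := by
  have key : (∑ π : Equiv.Perm (Fin K), axPerm π⁻¹ (ψ (axPerm π (axPerm σ x))))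
      = axPerm σ (∑ π : Equiv.Perm (Fin K), axPerm π⁻¹ (ψ (axPerm π x))) := by
    rw [axPerm_sum]
    apply Fintype.sum_equiv (Equiv.mulRight σ)
    intro π
    simp only [Equiv.coe_mulRight]
    rw [axPerm_mul, axPerm_mul]
    congr 1
    group
  rw [key, hφ]
end

section
/- The 2D set-based axial convolution of the paper, applied to a 2×2 patch, equals a standard 2D convolution with a symmetric kernel: for a 1D kernel (a, b), the value Σ_{π ∈ S_2} AvgPool(Conv1D_{(a,b)}(T_π(x))) equals the Frobenius inner product of the symmetric kernel [[a, (a+b)/2], [(a+b)/2, b]] with the patch [[x₁, x₂], [x₃, x₄]], i.e., it equals a·x₁ + ((a+b)/2)·x₂ + ((a+b)/2)·x₃ + b·x₄. -/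
/-- The axis-permutation (transpose) action on a rank-2 tensor given in
curried matrix form. -/
def axPerm2 (π : Equiv.Perm (Fin 2)) (x : Fin 2 → Fin 2 → ℝ) :
    Fin 2 → Fin 2 → ℝ :=
  fun i j => x (![i, j] (π 0)) (![i, j] (π 1))

/-- The 2D set-based axial convolution on a 2×2 patch equals a standard 2D
convolution with the symmetric kernel `[[a, (a+b)/2], [(a+b)/2, b]]`. -/
theorem sxnn_conv_symmetric_kernel (x : Fin 2 → Fin 2 → ℝ) (a b : ℝ) :
    (∑ π : Equiv.Perm (Fin 2),
        (1 / 2 : ℝ) * ∑ i : Fin 2, (a * axPerm2 π x i 0 + b * axPerm2 π x i 1)) =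
      a * x 0 0 + ((a + b) / 2) * x 0 1 + ((a + b) / 2) * x 1 0 + b * x 1 1 := by
  have huniv : (Finset.univ : Finset (Equiv.Perm (Fin 2))) = {1, Equiv.swap 0 1} := by decide
  rw [huniv, Finset.sum_insert (by decide), Finset.sum_singleton]
  simp [axPerm2, Fin.sum_univ_two, Equiv.swap_apply_left, Equiv.swap_apply_right]
  ring
end
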